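/- If f(u) = u/(1−u²)^l − αu on (−1,1) with l > 1 and α ∈ ℝ, and F(u) = ∫₀^u f(v)dv, then there exist β, C > 0 such that |f(u)| ≤ β|F(u)|^κ + C for all u ∈ (−1,1), where κ = 1 + 1/(l−1). -/

import Mathlib

/-!
The primitive is explicit: `F(u) = ((1 - u²)^(1-l) - 1) / (2(l-1)) - αu²/2`. With
`X = (1 - u²)^(1-l)` one has `X^κ = (1 - u²)^(-l)`, which dominates `|f(u)|` up to the
constant `|α|`, while `X` itself is at most `2(l-1)|F(u)|` plus a constant `M/2`. Raising
`X ≤ max (4(l-1)|F(u)|) M` to the power `κ` gives the claim.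
-/

open Real intervalIntegral

lemma one_sub_sq_pos {v : ℝ} (hv : v ∈ Set.Ioo (-1 : ℝ) 1) : 0 < 1 - v ^ 2 := by
  nlinarith [hv.1, hv.2]

lemma hasDerivAt_singularPotential_primitive (l α : ℝ) (hl : l ≠ 1) {v : ℝ}
    (hv : 0 < 1 - v ^ 2) :
    HasDerivAt (fun x => (1 - x ^ 2) ^ (1 - l) / (2 * (l - 1)) - α * x ^ 2 / 2)
      (v / (1 - v ^ 2) ^ l - α * v) v := by
  have hsq : HasDerivAt (fun x : ℝ => 1 - x ^ 2) (-(2 * v)) v := by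
    simpa using (hasDerivAt_pow 2 v).const_sub 1
  have hpow := (hsq.rpow_const (p := 1 - l) (Or.inl hv.ne')).div_const (2 * (l - 1))
  have hquad := ((hasDerivAt_pow 2 v).const_mul α).div_const 2
  refine (hpow.sub hquad).congr_deriv ?_
  have hl' : l - 1 ≠ 0 := sub_ne_zero.mpr hl
  rw [show 1 - l - 1 = -l by ring, rpow_neg hv.le]
  field_simp
  ring

theorem integral_singularPotential (l α : ℝ) (hl : l ≠ 1) {u : ℝ}
    (hu : u ∈ Set.Ioo (-1 : ℝ) 1) :
    ∫ v in (0 : ℝ)..u, (v / (1 - v ^ 2) ^ l - α * v)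
      = ((1 - u ^ 2) ^ (1 - l) - 1) / (2 * (l - 1)) - α * u ^ 2 / 2 := by
  have hsub : Set.uIcc 0 u ⊆ Set.Ioo (-1 : ℝ) 1 :=
    Set.ordConnected_Ioo.uIcc_subset ⟨by norm_num, by norm_num⟩ hu
  have hpos : ∀ v ∈ Set.uIcc 0 u, 0 < 1 - v ^ 2 := fun v hv => one_sub_sq_pos (hsub hv)
  have hcont : ContinuousOn (fun v : ℝ => v / (1 - v ^ 2) ^ l - α * v) (Set.uIcc 0 u) := by
    refine ContinuousOn.sub (ContinuousOn.div (by fun_prop) ?_ ?_) (by fun_prop)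
    · exact ContinuousOn.rpow_const (by fun_prop) fun v hv => Or.inl (hpos v hv).ne'
    · exact fun v hv => (rpow_pos_of_pos (hpos v hv) l).ne'
  rw [integral_eq_sub_of_hasDerivAt
    (fun v hv => hasDerivAt_singularPotential_primitive l α hl (hpos v hv))
    hcont.intervalIntegrable]
  simp only [zero_pow two_ne_zero, sub_zero, one_rpow, mul_zero, zero_div]
  ring

lemma rpow_one_sub_rpow_one_add_inv {l t : ℝ} (hl : l ≠ 1) (ht : 0 ≤ t) :
    (t ^ (1 - l)) ^ (1 + 1 / (l - 1)) = (t ^ l)⁻¹ := by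
  have hl' : l - 1 ≠ 0 := sub_ne_zero.mpr hl
  rw [← rpow_mul ht, ← rpow_neg ht]
  congr 1
  field_simp
  ring

lemma abs_singularPotential_le (l α : ℝ) {u : ℝ} (hu : u ∈ Set.Ioo (-1 : ℝ) 1) :
    |u / (1 - u ^ 2) ^ l - α * u| ≤ ((1 - u ^ 2) ^ l)⁻¹ + |α| := by
  have hu1 : |u| ≤ 1 := abs_le.mpr ⟨hu.1.le, hu.2.le⟩
  have htl : 0 < (1 - u ^ 2) ^ l := rpow_pos_of_pos (one_sub_sq_pos hu) l
  calc |u / (1 - u ^ 2) ^ l - α * u|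
      ≤ |u| / (1 - u ^ 2) ^ l + |α| * |u| :=
        (abs_sub _ _).trans_eq (by rw [abs_div, abs_mul, abs_of_pos htl])
    _ ≤ 1 / (1 - u ^ 2) ^ l + |α| * 1 := by gcongr
    _ = ((1 - u ^ 2) ^ l)⁻¹ + |α| := by rw [one_div, mul_one]

lemma rpow_one_sub_le_max {l : ℝ} (α : ℝ) (hl : 1 < l) {u : ℝ}
    (hu : u ∈ Set.Ioo (-1 : ℝ) 1) :
    (1 - u ^ 2) ^ (1 - l) ≤ max
      (4 * (l - 1) * |((1 - u ^ 2) ^ (1 - l) - 1) / (2 * (l - 1)) - α * u ^ 2 / 2|)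
      (2 * (1 + (l - 1) * |α|)) := by
  set X := (1 - u ^ 2) ^ (1 - l)
  set F := (X - 1) / (2 * (l - 1)) - α * u ^ 2 / 2
  have hl' : 0 ≤ l - 1 := sub_nonneg.mpr hl.le
  have hαu : α * u ^ 2 ≤ |α| :=
    calc α * u ^ 2 ≤ |α| * u ^ 2 := mul_le_mul_of_nonneg_right (le_abs_self α) (sq_nonneg u)
      _ ≤ |α| := mul_le_of_le_one_right (abs_nonneg α) (by linarith [one_sub_sq_pos hu])
  have hX : X = 2 * (l - 1) * F + (1 + (l - 1) * (α * u ^ 2)) := by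
    simp only [F]
    field_simp [(sub_pos.mpr hl).ne']
    ring
  have hXF : X ≤ 2 * (l - 1) * |F| + (1 + (l - 1) * |α|) := by
    rw [hX]
    gcongr
    exact le_abs_self F
  rcases le_total (2 * (l - 1) * |F|) (1 + (l - 1) * |α|) with h | h
  · exact le_max_of_le_right (by linarith)
  · exact le_max_of_le_left (by linarith)

lemma rpow_le_rpow_add_rpow_of_le_max {x a b p : ℝ} (hx : 0 ≤ x) (ha : 0 ≤ a) (hb : 0 ≤ b)
    (hp : 0 ≤ p) (h : x ≤ max a b) : x ^ p ≤ a ^ p + b ^ p :=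
  calc x ^ p ≤ max a b ^ p := rpow_le_rpow hx h hp
    _ = max (a ^ p) (b ^ p) := rpow_max ha hb hp
    _ ≤ a ^ p + b ^ p := max_le_add_of_nonneg (rpow_nonneg ha p) (rpow_nonneg hb p)

/-- For the singular potential `f(u) = u/(1-u²)^l - αu` on `(-1,1)` with
`l > 1`, one has `|f(u)| ≤ β |F(u)|^κ + C` with `κ = 1 + 1/(l-1)`. -/
theorem stmt_18 (l α : ℝ) (hl : 1 < l) :
    ∃ β > 0, ∃ C > 0, ∀ u ∈ Set.Ioo (-1 : ℝ) 1,
      |u / (1 - u ^ 2) ^ l - α * u| ≤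
        β * |∫ v in (0 : ℝ)..u, (v / (1 - v ^ 2) ^ l - α * v)| ^ (1 + 1 / (l - 1))
          + C := by
  have hl' : 0 < l - 1 := sub_pos.mpr hl
  set κ := 1 + 1 / (l - 1)
  have hκ : 0 ≤ κ := by positivity
  refine ⟨(4 * (l - 1)) ^ κ, by positivity, (2 * (1 + (l - 1) * |α|)) ^ κ + |α|, by positivity,
    fun u hu => ?_⟩
  have ht := (one_sub_sq_pos hu).le
  rw [integral_singularPotential l α hl.ne' hu]
  calc |u / (1 - u ^ 2) ^ l - α * u|
      ≤ ((1 - u ^ 2) ^ (1 - l)) ^ κ + |α| := by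
        rw [rpow_one_sub_rpow_one_add_inv hl.ne' ht]
        exact abs_singularPotential_le l α hu
    _ ≤ (4 * (l - 1) * |((1 - u ^ 2) ^ (1 - l) - 1) / (2 * (l - 1)) - α * u ^ 2 / 2|) ^ κ
          + (2 * (1 + (l - 1) * |α|)) ^ κ + |α| := by
        gcongr
        exact rpow_le_rpow_add_rpow_of_le_max (rpow_nonneg ht _) (by positivity) (by positivity)
          hκ (rpow_one_sub_le_max α hl hu)
    _ = _ := by rw [mul_rpow (by positivity) (abs_nonneg _)]; ring
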